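/- arXiv:math/0202273 — 6 statements merged into one kernel-verified Lean document; each statement's English description precedes it below -/
import Mathlib

section
/- If the real power series inequality |1 - (1-z)e^z| ≤ |z|^2 holds for |z| ≤ 1, and (α_n) is an increasing sequence of reals with α_1 > 1 and ∑_n 1/α_n^λ < ∞ for every λ > 1, then the infinite product ∏_n (1 - α_n^{-s}) e^{α_n^{-s}} converges to an analytic function of s on the half-plane Re(s) > 1/2 that never vanishes there. -/
/-!
Write `E(z) = (1 - z) e^z`. Since `α n > 1`, the points `α n ^ (-s)` lie in the unit disc for
`Re s > 0`, so the assumed inequality gives `|E(α n ^ (-s)) - 1| ≤ α n ^ (-2 Re s)`. On each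
half-plane `Re s > σ > 1/2` this is dominated by the summable `α n ^ (-2σ)`, so the product
converges locally uniformly and its limit is holomorphic; it does not vanish because no factor
does and `∑ |E(α n ^ (-s)) - 1| < ∞`.
-/

open Complex Filter

noncomputable def weierstrassFactor (z : ℂ) : ℂ := (1 - z) * exp z

lemma weierstrassFactor_ne_zero {z : ℂ} (hz : z ≠ 1) : weierstrassFactor z ≠ 0 :=
  mul_ne_zero (sub_ne_zero.2 hz.symm) (exp_ne_zero z)

lemma differentiable_weierstrassFactor : Differentiable ℂ weierstrassFactor := by
  unfold weierstrassFactor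
  fun_prop

theorem differentiableOn_tprod_one_add {ι : Type*} {f : ι → ℂ → ℂ} {U : Set ℂ} {u : ι → ℝ}
    (hU : IsOpen U) (hu : Summable u) (h : ∀ᶠ i in cofinite, ∀ z ∈ U, ‖f i z‖ ≤ u i)
    (hf : ∀ i, DifferentiableOn ℂ (f i) U) :
    DifferentiableOn ℂ (fun z ↦ ∏' i, (1 + f i z)) U := by
  have hprod := hu.hasProdLocallyUniformlyOn_one_add hU h fun i ↦ (hf i).continuousOn
  rw [hasProdLocallyUniformlyOn_iff_tendstoLocallyUniformlyOn] at hprod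
  refine hprod.differentiableOn (Eventually.of_forall fun t ↦ ?_) hU
  exact DifferentiableOn.fun_finsetProd fun i _ ↦ (differentiableOn_const 1).add (hf i)

lemma norm_ofReal_cpow_neg_le {x σ : ℝ} (hx : 1 ≤ x) {s : ℂ} (hs : σ ≤ s.re) :
    ‖(x : ℂ) ^ (-s)‖ ≤ x ^ (-σ) := by
  rw [norm_cpow_eq_rpow_re_of_pos (by linarith), neg_re]
  exact Real.rpow_le_rpow_of_exponent_le hx (neg_le_neg hs)

lemma norm_weierstrassFactor_cpow_sub_one_le
    (hE : ∀ z : ℂ, ‖z‖ ≤ 1 → ‖1 - weierstrassFactor z‖ ≤ ‖z‖ ^ 2)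
    {x σ : ℝ} (hx : 1 ≤ x) (hσ : 0 ≤ σ) {s : ℂ} (hs : σ ≤ s.re) :
    ‖weierstrassFactor ((x : ℂ) ^ (-s)) - 1‖ ≤ x ^ (-(2 * σ)) := by
  have hz : ‖(x : ℂ) ^ (-s)‖ ≤ x ^ (-σ) := norm_ofReal_cpow_neg_le hx hs
  calc ‖weierstrassFactor ((x : ℂ) ^ (-s)) - 1‖
      ≤ ‖(x : ℂ) ^ (-s)‖ ^ 2 := by
        rw [norm_sub_rev]
        exact hE _ (hz.trans (Real.rpow_le_one_of_one_le_of_nonpos hx (by linarith)))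
    _ ≤ (x ^ (-σ)) ^ 2 := by gcongr
    _ = x ^ (-(2 * σ)) := by
        rw [← Real.rpow_mul_natCast (by linarith)]
        ring_nf

lemma weierstrassFactor_cpow_ne_zero {x : ℝ} (hx : 1 < x) {s : ℂ} (hs : 0 < s.re) :
    weierstrassFactor ((x : ℂ) ^ (-s)) ≠ 0 := by
  refine weierstrassFactor_ne_zero fun h ↦ ?_
  have hlt : ‖(x : ℂ) ^ (-s)‖ < 1 := by
    rw [norm_cpow_eq_rpow_re_of_pos (by linarith), neg_re]
    exact Real.rpow_lt_one_of_one_lt_of_neg hx (neg_neg_of_pos hs)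
  simp [h] at hlt

section CpowProduct

variable {ι : Type*} {α : ι → ℝ}

lemma summable_norm_weierstrassFactor_cpow_sub_one
    (hE : ∀ z : ℂ, ‖z‖ ≤ 1 → ‖1 - weierstrassFactor z‖ ≤ ‖z‖ ^ 2)
    (hα : ∀ i, 1 < α i) {s : ℂ} (hs : 0 ≤ s.re)
    (hsum : Summable fun i ↦ α i ^ (-(2 * s.re))) :
    Summable fun i ↦ ‖weierstrassFactor ((α i : ℂ) ^ (-s)) - 1‖ :=
  hsum.of_nonneg_of_le (fun _ ↦ norm_nonneg _)
    fun i ↦ norm_weierstrassFactor_cpow_sub_one_le hE (hα i).le hs le_rfl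

lemma hasProd_weierstrassFactor_cpow
    (hE : ∀ z : ℂ, ‖z‖ ≤ 1 → ‖1 - weierstrassFactor z‖ ≤ ‖z‖ ^ 2)
    (hα : ∀ i, 1 < α i) {s : ℂ} (hs : 0 ≤ s.re)
    (hsum : Summable fun i ↦ α i ^ (-(2 * s.re))) :
    HasProd (fun i ↦ weierstrassFactor ((α i : ℂ) ^ (-s)))
      (∏' i, weierstrassFactor ((α i : ℂ) ^ (-s))) := by
  have h := multipliable_one_add_of_summable
    (summable_norm_weierstrassFactor_cpow_sub_one hE hα hs hsum)
  simp only [add_sub_cancel] at h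
  exact h.hasProd

lemma tprod_weierstrassFactor_cpow_ne_zero
    (hE : ∀ z : ℂ, ‖z‖ ≤ 1 → ‖1 - weierstrassFactor z‖ ≤ ‖z‖ ^ 2)
    (hα : ∀ i, 1 < α i) {s : ℂ} (hs : 0 < s.re)
    (hsum : Summable fun i ↦ α i ^ (-(2 * s.re))) :
    ∏' i, weierstrassFactor ((α i : ℂ) ^ (-s)) ≠ 0 := by
  have h := tprod_one_add_ne_zero_of_summable
    (fun i ↦ by simpa using weierstrassFactor_cpow_ne_zero (hα i) hs)
    (summable_norm_weierstrassFactor_cpow_sub_one hE hα hs.le hsum)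
  simpa only [add_sub_cancel] using h

lemma differentiableOn_tprod_weierstrassFactor_cpow
    (hE : ∀ z : ℂ, ‖z‖ ≤ 1 → ‖1 - weierstrassFactor z‖ ≤ ‖z‖ ^ 2)
    (hα : ∀ i, 1 < α i) {σ : ℝ} (hσ : 0 ≤ σ) (hsum : Summable fun i ↦ α i ^ (-(2 * σ))) :
    DifferentiableOn ℂ (fun s : ℂ ↦ ∏' i, weierstrassFactor ((α i : ℂ) ^ (-s)))
      {s | σ < s.re} := by
  have hfactor (i : ι) : Differentiable ℂ fun s : ℂ ↦ weierstrassFactor ((α i : ℂ) ^ (-s)) :=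
    differentiable_weierstrassFactor.comp
      (differentiable_neg.const_cpow (.inl (ofReal_ne_zero.2 (by linarith [hα i]))))
  have h := differentiableOn_tprod_one_add
    (f := fun i (s : ℂ) ↦ weierstrassFactor ((α i : ℂ) ^ (-s)) - 1)
    (isOpen_lt continuous_const continuous_re) hsum
    (Eventually.of_forall fun i (s : ℂ) hs ↦
      norm_weierstrassFactor_cpow_sub_one_le hE (hα i).le hσ hs.out.le)
    fun i ↦ ((hfactor i).sub_const 1).differentiableOn
  simpa only [add_sub_cancel] using h

lemma analyticOn_tprod_weierstrassFactor_cpow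
    (hE : ∀ z : ℂ, ‖z‖ ≤ 1 → ‖1 - weierstrassFactor z‖ ≤ ‖z‖ ^ 2)
    (hα : ∀ i, 1 < α i) {σ : ℝ} (hσ : 0 ≤ σ)
    (hsum : ∀ τ, σ < τ → Summable fun i ↦ α i ^ (-(2 * τ))) :
    AnalyticOn ℂ (fun s : ℂ ↦ ∏' i, weierstrassFactor ((α i : ℂ) ^ (-s))) {s | σ < s.re} := by
  have hopen (τ : ℝ) : IsOpen {s : ℂ | τ < s.re} := isOpen_lt continuous_const continuous_re
  refine DifferentiableOn.analyticOn (fun s hs ↦ ?_) (hopen σ)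
  obtain ⟨τ, hστ, hτs⟩ := exists_between hs.out
  exact ((differentiableOn_tprod_weierstrassFactor_cpow hE hα (hσ.trans hστ.le)
    (hsum τ hστ)).differentiableAt ((hopen τ).mem_nhds hτs)).differentiableWithinAt

end CpowProduct

/-- If `|1 - (1-z)e^z| ≤ |z|^2` for `|z| ≤ 1`, and `(α n)` is an increasing
sequence of reals with `α 0 > 1` and `∑ 1/(α n)^λ < ∞` for every `λ > 1`, then the product
`∏ (1 - α n ^ (-s)) * exp (α n ^ (-s))` converges to an analytic, nonvanishing function
on `Re s > 1/2`. -/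
theorem stmt0 (α : ℕ → ℝ)
    (hineq : ∀ z : ℂ, ‖z‖ ≤ 1 → ‖1 - (1 - z) * Complex.exp z‖ ≤ ‖z‖ ^ 2)
    (hmono : StrictMono α) (hα1 : 1 < α 0)
    (hsum : ∀ l : ℝ, 1 < l → Summable fun n => (α n) ^ (-l)) :
    ∃ F : ℂ → ℂ,
      AnalyticOn ℂ F {s : ℂ | 1 / 2 < s.re} ∧
      (∀ s ∈ {s : ℂ | 1 / 2 < s.re}, F s ≠ 0) ∧
      (∀ s ∈ {s : ℂ | 1 / 2 < s.re},
        HasProd (fun n => (1 - (α n : ℂ) ^ (-s)) * Complex.exp ((α n : ℂ) ^ (-s))) (F s)) := by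
  have hα : ∀ n, 1 < α n := fun n ↦ hα1.trans_le (hmono.monotone n.zero_le)
  have hsum' : ∀ τ : ℝ, 1 / 2 < τ → Summable fun n ↦ α n ^ (-(2 * τ)) :=
    fun τ hτ ↦ hsum _ (by linarith)
  refine ⟨fun s ↦ ∏' n, weierstrassFactor ((α n : ℂ) ^ (-s)),
    analyticOn_tprod_weierstrassFactor_cpow hineq hα (by norm_num) hsum',
    fun s hs ↦ tprod_weierstrassFactor_cpow_ne_zero hineq hα (by linarith [hs.out]) (hsum' _ hs),
    fun s hs ↦ hasProd_weierstrassFactor_cpow hineq hα (by linarith [hs.out]) (hsum' _ hs)⟩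
end

section
/- Let (α_n) and (β_n) be increasing sequences of reals with α_n ≤ β_n ≤ α_{n+1} for all n, α_1 > 1, and ∑_n α_n^{-λ} < ∞ for every λ > 1. Then the Euler products E_1(s) = ∏_n (1 - α_n^{-s})^{-1} and E_2(s) = ∏_n (1 - β_n^{-s})^{-1} are well-defined and analytic for Re(s) > 1, and there exists a function f(s) analytic and non-vanishing on Re(s) > 0 such that E_1(s) = E_2(s) f(s) for Re(s) > 1. -/
open Complex

/-!
Taking logarithms, `E₁ / E₂ = exp (∑ₙ (log (1 - βₙ^{-s}) - log (1 - αₙ^{-s})))`. Since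
`log (1 - z)` is Lipschitz on a disc of radius `r < 1` and
`‖βₙ^{-s} - αₙ^{-s}‖ ≤ ‖s‖ / σ · (αₙ^{-σ} - βₙ^{-σ})` for `Re s ≥ σ > 0`, the interlacing
`αₙ ≤ βₙ ≤ αₙ₊₁` dominates the terms of this series by the telescoping series
`∑ₙ (αₙ^{-σ} - αₙ₊₁^{-σ})`. The series therefore converges locally uniformly on `Re s > 0`, and its
exponential `f` is holomorphic and zero-free there. The Euler products themselves are handled in
the same way on `Re s > 1`, with `∑ₙ αₙ^{-σ}` as dominating series.
-/

namespace InterlacedEulerProduct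

lemma one_sub_mem_slitPlane {z : ℂ} (hz : ‖z‖ < 1) : 1 - z ∈ slitPlane :=
  ball_one_subset_slitPlane (by simpa [dist_eq_norm] using hz)

lemma norm_ofReal_cpow_neg_le {c x σ : ℝ} {s : ℂ} (hc : 1 ≤ c) (hcx : c ≤ x) (hσ : 0 ≤ σ)
    (hs : σ ≤ s.re) : ‖(x : ℂ) ^ (-s)‖ ≤ c ^ (-σ) := by
  rw [norm_cpow_eq_rpow_re_of_pos (by linarith), neg_re]
  calc x ^ (-s.re) ≤ x ^ (-σ) := Real.rpow_le_rpow_of_exponent_le (hc.trans hcx) (by linarith)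
    _ ≤ c ^ (-σ) := Real.rpow_le_rpow_of_nonpos (by linarith) hcx (by linarith)

lemma norm_ofReal_cpow_neg_lt_one {x : ℝ} (hx : 1 < x) {s : ℂ} (hs : 0 < s.re) :
    ‖(x : ℂ) ^ (-s)‖ < 1 :=
  (norm_ofReal_cpow_neg_le hx.le le_rfl hs.le le_rfl).trans_lt
    (Real.rpow_lt_one_of_one_lt_of_neg hx (by linarith))

lemma summable_ofReal_cpow_neg {γ : ℕ → ℝ} (hγ : ∀ n, 0 < γ n) {s : ℂ}
    (hsum : Summable fun n => γ n ^ (-s.re)) : Summable fun n => (γ n : ℂ) ^ (-s) :=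
  .of_norm <| by simpa only [norm_cpow_eq_rpow_re_of_pos (hγ _), neg_re] using hsum

lemma summable_sub_succ_of_antitone {u : ℕ → ℝ} (hu : Antitone u) (h0 : ∀ n, 0 ≤ u n) :
    Summable fun n => u n - u (n + 1) :=
  summable_of_sum_range_le (fun n => sub_nonneg.2 (hu n.le_succ)) fun n => by
    rw [Finset.sum_range_sub']
    linarith [h0 n]

lemma norm_log_one_sub_sub_log_one_sub_le {r : ℝ} (hr : r < 1) {a b : ℂ} (ha : ‖a‖ ≤ r)
    (hb : ‖b‖ ≤ r) : ‖log (1 - b) - log (1 - a)‖ ≤ (1 - r)⁻¹ * ‖b - a‖ := by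
  have hball : ∀ {w : ℂ}, w ∈ Metric.closedBall 0 r ↔ ‖w‖ ≤ r := by simp
  refine Convex.norm_image_sub_le_of_norm_hasDerivWithin_le (f := fun w => log (1 - w))
    (f' := fun w => -(1 - w)⁻¹)
    (fun w hw => ?_) (fun w hw => ?_) (convex_closedBall 0 r) (hball.2 ha) (hball.2 hb)
  · have hw1 : ‖w‖ < 1 := (hball.1 hw).trans_lt hr
    have := ((hasDerivAt_id w).const_sub 1).clog (one_sub_mem_slitPlane hw1)
    simpa [neg_div] using this.hasDerivWithinAt
  · have h1 : 1 - r ≤ ‖1 - w‖ := by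
      have := norm_sub_norm_le (1 : ℂ) w
      rw [norm_one] at this
      linarith [hball.1 hw]
    rw [norm_neg, norm_inv]
    exact inv_anti₀ (by linarith) h1

lemma norm_log_one_sub_le {r : ℝ} (hr : r < 1) {b : ℂ} (hb : ‖b‖ ≤ r) :
    ‖log (1 - b)‖ ≤ (1 - r)⁻¹ * ‖b‖ := by
  simpa using
    norm_log_one_sub_sub_log_one_sub_le (a := 0) hr (by simpa using (norm_nonneg b).trans hb) hb

/-- `y^{-s} - x^{-s} = -s ∫ₓʸ t^{-s-1} dt`, and fencing compares it with `‖s‖ ∫ₓʸ t^{-σ-1} dt`. -/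
lemma norm_ofReal_cpow_neg_sub_le {x y σ : ℝ} {s : ℂ} (hx : 1 ≤ x) (hxy : x ≤ y) (hσ : 0 < σ)
    (hs : σ ≤ s.re) :
    ‖(y : ℂ) ^ (-s) - (x : ℂ) ^ (-s)‖ ≤ ‖s‖ / σ * (x ^ (-σ) - y ^ (-σ)) := by
  have hs0 : -s ≠ 0 := neg_ne_zero.2 fun h => by simp [h] at hs; linarith
  have hf : ∀ t ∈ Set.Icc x y, HasDerivAt (fun t : ℝ => (t : ℂ) ^ (-s) - (x : ℂ) ^ (-s))
      (-s * (t : ℂ) ^ (-s - 1)) t := fun t ht =>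
    (hasDerivAt_ofReal_cpow_const (by linarith [ht.1]) hs0).sub_const _
  have hB : ∀ t ∈ Set.Icc x y, HasDerivAt (fun t : ℝ => ‖s‖ / σ * (x ^ (-σ) - t ^ (-σ)))
      (‖s‖ * t ^ (-σ - 1)) t := fun t ht => by
    have := ((Real.hasDerivAt_rpow_const (x := t) (p := -σ) (Or.inl (by linarith [ht.1]))
      ).const_sub (x ^ (-σ))).const_mul (‖s‖ / σ)
    exact this.congr_deriv (by field_simp)
  have bound : ∀ t ∈ Set.Ico x y, ‖-s * (t : ℂ) ^ (-s - 1)‖ ≤ ‖s‖ * t ^ (-σ - 1) := by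
    intro t ht
    have ht1 : 1 ≤ t := hx.trans ht.1
    rw [norm_mul, norm_neg, norm_cpow_eq_rpow_re_of_pos (by linarith)]
    refine mul_le_mul_of_nonneg_left (Real.rpow_le_rpow_of_exponent_le ht1 ?_) (norm_nonneg s)
    simp only [sub_re, neg_re, one_re]
    linarith
  simpa using image_norm_le_of_norm_deriv_right_le_deriv_boundary'
    (fun t ht => (hf t ht).continuousAt.continuousWithinAt)
    (fun t ht => (hf t (Set.Ico_subset_Icc_self ht)).hasDerivWithinAt) (by simp)
    (fun t ht => (hB t ht).continuousAt.continuousWithinAt)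
    (fun t ht => (hB t (Set.Ico_subset_Icc_self ht)).hasDerivWithinAt) bound
    (Set.right_mem_Icc.2 hxy)

lemma differentiableAt_log_one_sub_cpow {x : ℝ} (hx : 1 < x) {s : ℂ} (hs : 0 < s.re) :
    DifferentiableAt ℂ (fun s : ℂ => log (1 - (x : ℂ) ^ (-s))) s :=
  ((differentiable_neg s).const_cpow (Or.inl (ofReal_ne_zero.2 (by linarith)))).const_sub 1
    |>.clog (one_sub_mem_slitPlane (norm_ofReal_cpow_neg_lt_one hx hs))

lemma differentiableOn_tsum_of_locally_summable_norm {ι : Type*} {F : ι → ℂ → ℂ} {U : Set ℂ}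
    (hF : ∀ i, DifferentiableOn ℂ (F i) U)
    (hloc : ∀ z ∈ U, ∃ V ⊆ U, IsOpen V ∧ z ∈ V ∧
      ∃ u : ι → ℝ, Summable u ∧ ∀ i, ∀ w ∈ V, ‖F i w‖ ≤ u i) :
    DifferentiableOn ℂ (fun w => ∑' i, F i w) U := by
  intro z hz
  obtain ⟨V, hVU, hV, hzV, u, hu, hFu⟩ := hloc z hz
  exact ((differentiableOn_tsum_of_summable_norm hu (fun i => (hF i).mono hVU) hV hFu)
    |>.differentiableAt (hV.mem_nhds hzV)).differentiableWithinAt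

noncomputable def logEuler (γ : ℕ → ℝ) (s : ℂ) : ℂ :=
  ∑' n, -log (1 - (γ n : ℂ) ^ (-s))

noncomputable def logEulerQuotient (α β : ℕ → ℝ) (s : ℂ) : ℂ :=
  ∑' n, (log (1 - (β n : ℂ) ^ (-s)) - log (1 - (α n : ℂ) ^ (-s)))

lemma summable_log_one_sub_cpow {γ : ℕ → ℝ} (hγ : ∀ n, 1 < γ n) {s : ℂ}
    (hsum : Summable fun n => γ n ^ (-s.re)) :
    Summable fun n => log (1 - (γ n : ℂ) ^ (-s)) :=
  (summable_ofReal_cpow_neg (fun n => one_pos.trans (hγ n)) hsum).clog_one_sub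

lemma hasProd_exp_logEuler {γ : ℕ → ℝ} (hγ : ∀ n, 1 < γ n) {s : ℂ} (hs : 0 < s.re)
    (hsum : Summable fun n => γ n ^ (-s.re)) :
    HasProd (fun n => (1 - (γ n : ℂ) ^ (-s))⁻¹) (cexp (logEuler γ s)) := by
  have hne : ∀ n, 1 - (γ n : ℂ) ^ (-s) ≠ 0 := fun n =>
    slitPlane_ne_zero (one_sub_mem_slitPlane (norm_ofReal_cpow_neg_lt_one (hγ n) hs))
  rw [logEuler]
  convert (summable_log_one_sub_cpow hγ hsum).neg.hasSum.cexp using 1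
  ext n
  simp [exp_neg, exp_log (hne n)]

lemma logEuler_eq_add_logEulerQuotient {α β : ℕ → ℝ} (hα : ∀ n, 1 < α n) (hβ : ∀ n, 1 < β n)
    {s : ℂ} (hα_sum : Summable fun n => α n ^ (-s.re))
    (hβ_sum : Summable fun n => β n ^ (-s.re)) :
    logEuler α s = logEuler β s + logEulerQuotient α β s := by
  have hA := summable_log_one_sub_cpow hα hα_sum
  have hB := summable_log_one_sub_cpow hβ hβ_sum
  rw [logEuler, logEuler, logEulerQuotient, ← hB.neg.tsum_add (hB.sub hA)]
  exact tsum_congr fun n => by ring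

lemma differentiableOn_logEuler {γ : ℕ → ℝ} {c : ℝ} (hc : 1 < c) (hγ : ∀ n, c ≤ γ n)
    (hsum : ∀ l : ℝ, 1 < l → Summable fun n => γ n ^ (-l)) :
    DifferentiableOn ℂ (logEuler γ) {s | 1 < s.re} := by
  have hγ1 : ∀ n, 1 < γ n := fun n => hc.trans_le (hγ n)
  refine differentiableOn_tsum_of_locally_summable_norm
    (fun n s hs => (differentiableAt_log_one_sub_cpow (hγ1 n)
      (one_pos.trans hs)).neg.differentiableWithinAt) fun s₀ hs₀ => ?_
  obtain ⟨σ, hσ, hσs₀⟩ := exists_between (show 1 < s₀.re from hs₀)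
  have hr : c ^ (-σ) < 1 := Real.rpow_lt_one_of_one_lt_of_neg hc (by linarith)
  refine ⟨{s | σ < s.re}, fun s hs => hσ.trans hs, isOpen_lt continuous_const continuous_re,
    hσs₀, fun n => (1 - c ^ (-σ))⁻¹ * γ n ^ (-σ),
    (hsum σ hσ).mul_left _, fun n w hw => ?_⟩
  have hw : σ ≤ w.re := le_of_lt hw
  rw [norm_neg]
  refine (norm_log_one_sub_le hr (norm_ofReal_cpow_neg_le hc.le (hγ n) (by linarith) hw)).trans ?_
  exact mul_le_mul_of_nonneg_left (norm_ofReal_cpow_neg_le (hγ1 n).le le_rfl (by linarith) hw)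
    (inv_nonneg.2 (by linarith))

lemma monotone_of_interlace {α β : ℕ → ℝ} (hinter : ∀ n, α n ≤ β n ∧ β n ≤ α (n + 1)) :
    Monotone α :=
  monotone_nat_of_le_succ fun n => (hinter n).1.trans (hinter n).2

lemma differentiableOn_logEulerQuotient {α β : ℕ → ℝ}
    (hinter : ∀ n, α n ≤ β n ∧ β n ≤ α (n + 1)) (hα1 : 1 < α 0) :
    DifferentiableOn ℂ (logEulerQuotient α β) {s | 0 < s.re} := by
  have hαmono := monotone_of_interlace hinter
  have hα : ∀ n, α 0 ≤ α n := fun n => hαmono n.zero_le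
  have hβ : ∀ n, α 0 ≤ β n := fun n => (hα n).trans (hinter n).1
  refine differentiableOn_tsum_of_locally_summable_norm
    (fun n s hs => ((differentiableAt_log_one_sub_cpow (hα1.trans_le (hβ n)) hs).sub
      (differentiableAt_log_one_sub_cpow (hα1.trans_le (hα n)) hs)).differentiableWithinAt)
    fun s₀ hs₀ => ?_
  obtain ⟨σ, hσ, hσs₀⟩ := exists_between (show 0 < s₀.re from hs₀)
  set M := ‖s₀‖ + 1
  set r := α 0 ^ (-σ)
  have hr : r < 1 := Real.rpow_lt_one_of_one_lt_of_neg hα1 (by linarith)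
  have hanti : Antitone fun n => α n ^ (-σ) := fun m n hmn =>
    Real.rpow_le_rpow_of_nonpos (by linarith [hα m]) (hαmono hmn) (by linarith)
  refine ⟨{s | σ < s.re} ∩ Metric.ball s₀ 1, fun s hs => hσ.trans hs.1,
    (isOpen_lt continuous_const continuous_re).inter Metric.isOpen_ball,
    ⟨hσs₀, Metric.mem_ball_self one_pos⟩,
    fun n => (1 - r)⁻¹ * (M / σ * (α n ^ (-σ) - α (n + 1) ^ (-σ))),
    ((summable_sub_succ_of_antitone hanti fun n => Real.rpow_nonneg (by linarith [hα n]) _).mul_left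
      _).mul_left _, fun n w ⟨hwσ, hws₀⟩ => ?_⟩
  have hw : σ ≤ w.re := le_of_lt hwσ
  have hβ_rpow : α (n + 1) ^ (-σ) ≤ β n ^ (-σ) :=
    Real.rpow_le_rpow_of_nonpos (by linarith [hβ n]) (hinter n).2 (by linarith)
  calc ‖log (1 - (β n : ℂ) ^ (-w)) - log (1 - (α n : ℂ) ^ (-w))‖
      ≤ (1 - r)⁻¹ * ‖(β n : ℂ) ^ (-w) - (α n : ℂ) ^ (-w)‖ :=
        norm_log_one_sub_sub_log_one_sub_le hr (norm_ofReal_cpow_neg_le hα1.le (hα n) hσ.le hw)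
          (norm_ofReal_cpow_neg_le hα1.le (hβ n) hσ.le hw)
    _ ≤ (1 - r)⁻¹ * (‖w‖ / σ * (α n ^ (-σ) - β n ^ (-σ))) := by
        gcongr
        exact norm_ofReal_cpow_neg_sub_le (by linarith [hα n]) (hinter n).1 hσ hw
    _ ≤ (1 - r)⁻¹ * (M / σ * (α n ^ (-σ) - α (n + 1) ^ (-σ))) := by
        have : 0 ≤ α n ^ (-σ) - β n ^ (-σ) :=
          sub_nonneg.2 (Real.rpow_le_rpow_of_nonpos (by linarith [hα n]) (hinter n).1 (by linarith))
        gcongr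
        exact (norm_lt_of_mem_ball hws₀).le

end InterlacedEulerProduct

open InterlacedEulerProduct

theorem stmt1_general (α β : ℕ → ℝ)
    (hinter : ∀ n, α n ≤ β n ∧ β n ≤ α (n + 1)) (hα1 : 1 < α 0)
    (hsum : ∀ l : ℝ, 1 < l → Summable fun n => (α n) ^ (-l)) :
    ∃ E₁ E₂ f : ℂ → ℂ,
      AnalyticOn ℂ E₁ {s : ℂ | 1 < s.re} ∧
      AnalyticOn ℂ E₂ {s : ℂ | 1 < s.re} ∧
      (∀ s ∈ {s : ℂ | 1 < s.re},
        HasProd (fun n => (1 - (α n : ℂ) ^ (-s))⁻¹) (E₁ s) ∧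
        HasProd (fun n => (1 - (β n : ℂ) ^ (-s))⁻¹) (E₂ s)) ∧
      AnalyticOn ℂ f {s : ℂ | 0 < s.re} ∧
      (∀ s ∈ {s : ℂ | 0 < s.re}, f s ≠ 0) ∧
      (∀ s ∈ {s : ℂ | 1 < s.re}, E₁ s = E₂ s * f s) := by
  have hα : ∀ n, α 0 ≤ α n := fun n => monotone_of_interlace hinter n.zero_le
  have hβ : ∀ n, α 0 ≤ β n := fun n => (hα n).trans (hinter n).1
  have hβsum : ∀ l : ℝ, 1 < l → Summable fun n => β n ^ (-l) := fun l hl =>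
    (hsum l hl).of_nonneg_of_le (fun n => Real.rpow_nonneg (by linarith [hβ n]) _)
      fun n => Real.rpow_le_rpow_of_nonpos (by linarith [hα n]) (hinter n).1 (by linarith)
  have hα_one : ∀ n, 1 < α n := fun n => hα1.trans_le (hα n)
  have hβ_one : ∀ n, 1 < β n := fun n => hα1.trans_le (hβ n)
  have hopen : ∀ a : ℝ, IsOpen {s : ℂ | a < s.re} := fun a =>
    isOpen_lt continuous_const continuous_re
  refine ⟨fun s => cexp (logEuler α s), fun s => cexp (logEuler β s),
    fun s => cexp (logEulerQuotient α β s),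
    (differentiable_exp.comp_differentiableOn (differentiableOn_logEuler hα1 hα hsum)).analyticOn
      (hopen 1),
    (differentiable_exp.comp_differentiableOn (differentiableOn_logEuler hα1 hβ hβsum)).analyticOn
      (hopen 1),
    fun s hs => ⟨hasProd_exp_logEuler hα_one (one_pos.trans hs) (hsum _ hs),
      hasProd_exp_logEuler hβ_one (one_pos.trans hs) (hβsum _ hs)⟩,
    (differentiable_exp.comp_differentiableOn
      (differentiableOn_logEulerQuotient hinter hα1)).analyticOn (hopen 0),
    fun s _ => exp_ne_zero _, fun s hs => ?_⟩
  dsimp only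
  rw [← exp_add, logEuler_eq_add_logEulerQuotient hα_one hβ_one (hsum _ hs) (hβsum _ hs)]

/-- For interlaced increasing sequences `α n ≤ β n ≤ α (n+1)` with `α 0 > 1`
and `∑ (α n)^(-λ) < ∞` for all `λ > 1`, the Euler products
`E₁(s) = ∏ (1 - α n ^ (-s))⁻¹` and `E₂(s) = ∏ (1 - β n ^ (-s))⁻¹` are well defined and
analytic for `Re s > 1`, and `E₁ = E₂ · f` there for some analytic nonvanishing `f` on
`Re s > 0`. -/
theorem stmt1 (α β : ℕ → ℝ)
    (hαmono : StrictMono α) (hβmono : StrictMono β)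
    (hinter : ∀ n, α n ≤ β n ∧ β n ≤ α (n + 1)) (hα1 : 1 < α 0)
    (hsum : ∀ l : ℝ, 1 < l → Summable fun n => (α n) ^ (-l)) :
    ∃ E₁ E₂ f : ℂ → ℂ,
      AnalyticOn ℂ E₁ {s : ℂ | 1 < s.re} ∧
      AnalyticOn ℂ E₂ {s : ℂ | 1 < s.re} ∧
      (∀ s ∈ {s : ℂ | 1 < s.re},
        HasProd (fun n => (1 - (α n : ℂ) ^ (-s))⁻¹) (E₁ s) ∧
        HasProd (fun n => (1 - (β n : ℂ) ^ (-s))⁻¹) (E₂ s)) ∧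
      AnalyticOn ℂ f {s : ℂ | 0 < s.re} ∧
      (∀ s ∈ {s : ℂ | 0 < s.re}, f s ≠ 0) ∧
      (∀ s ∈ {s : ℂ | 1 < s.re}, E₁ s = E₂ s * f s) :=
  stmt1_general α β hinter hα1 hsum
end

section
/- The Dirichlet series ∑_n (1/α_n^s - 1/β_n^s), where (α_n), (β_n) are increasing interlaced real sequences with α_n ≤ β_n ≤ α_{n+1}, α_1 > 1, and ∑ α_n^{-λ} < ∞ for all λ > 1, converges to an analytic function on the half-plane Re(s) > 0. -/
open Complex

/-!
Writing `a^(-s) - b^(-s) = s ∫_a^b x^(-s-1) dx` and bounding `|x^(-s-1)| ≤ x^(-σ-1)` for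
`σ ≤ Re s` and `x ≥ 1` gives `‖a^(-s) - b^(-s)‖ ≤ (‖s‖/σ) (a^(-σ) - b^(-σ))`. For interlaced
sequences the real series `∑ (α n^(-σ) - β n^(-σ))` has nonnegative terms dominated by the
telescoping `α n^(-σ) - α (n+1)^(-σ)`, hence converges for every `σ > 0`. So the complex series
converges absolutely and locally uniformly on `Re s > 0`, and its sum is holomorphic there.
-/

theorem summable_sub_of_interlaced {u v : ℕ → ℝ} (hvu : ∀ n, v n ≤ u n)
    (hsucc : ∀ n, u (n + 1) ≤ v n) (hu : ∀ n, 0 ≤ u n) :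
    Summable fun n => u n - v n := by
  refine summable_of_sum_range_le (c := u 0) (fun n => sub_nonneg.2 (hvu n)) fun N => ?_
  calc ∑ n ∈ Finset.range N, (u n - v n)
      ≤ ∑ n ∈ Finset.range N, (u n - u (n + 1)) :=
        Finset.sum_le_sum fun n _ => by linarith [hsucc n]
    _ = u 0 - u N := Finset.sum_range_sub' u N
    _ ≤ u 0 := by linarith [hu N]

theorem norm_cpow_neg_sub_cpow_neg_le {a b : ℝ} (ha : 1 ≤ a) (hab : a ≤ b) {s : ℂ} {σ : ℝ}
    (hσ : 0 < σ) (hσs : σ ≤ s.re) :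
    ‖(a : ℂ) ^ (-s) - (b : ℂ) ^ (-s)‖ ≤ ‖s‖ / σ * (a ^ (-σ) - b ^ (-σ)) := by
  have hs : s ≠ 0 := fun h => by simp [h] at hσs; linarith
  have h0 : (0 : ℝ) ∉ Set.uIcc a b := by
    rw [Set.uIcc_of_le hab]; exact fun h => by linarith [h.1]
  have hexp : -s - 1 ≠ -1 := fun h => hs (neg_eq_zero.1 (by linear_combination h))
  have hdiff : (a : ℂ) ^ (-s) - (b : ℂ) ^ (-s) = s * ∫ x : ℝ in a..b, (x : ℂ) ^ (-s - 1) := by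
    rw [integral_cpow (Or.inr ⟨hexp, h0⟩), sub_add_cancel]
    field_simp
    ring
  have hbound : ‖∫ x : ℝ in a..b, (x : ℂ) ^ (-s - 1)‖ ≤ ∫ x : ℝ in a..b, x ^ (-σ - 1) := by
    refine intervalIntegral.norm_integral_le_of_norm_le hab (Filter.Eventually.of_forall
      fun x hx => ?_) (intervalIntegral.intervalIntegrable_rpow (Or.inr h0))
    have hx1 : 1 ≤ x := ha.trans hx.1.le
    rw [norm_cpow_eq_rpow_re_of_pos (by linarith), sub_re, neg_re, one_re]
    exact Real.rpow_le_rpow_of_exponent_le hx1 (by linarith)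
  have hreal : ∫ x : ℝ in a..b, x ^ (-σ - 1) = (a ^ (-σ) - b ^ (-σ)) / σ := by
    rw [integral_rpow (Or.inr ⟨by linarith, h0⟩), sub_add_cancel, div_neg, ← neg_div, neg_sub]
  calc ‖(a : ℂ) ^ (-s) - (b : ℂ) ^ (-s)‖
      ≤ ‖s‖ * ((a ^ (-σ) - b ^ (-σ)) / σ) := by
        rw [hdiff, norm_mul, ← hreal]; gcongr
    _ = ‖s‖ / σ * (a ^ (-σ) - b ^ (-σ)) := by ring

section Interlaced

variable {α β : ℕ → ℝ} (hinter : ∀ n, α n ≤ β n ∧ β n ≤ α (n + 1)) (hα : 1 ≤ α 0)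
include hinter hα

theorem one_le_of_interlaced (n : ℕ) : 1 ≤ α n :=
  hα.trans (monotone_nat_of_le_succ (fun n => (hinter n).1.trans (hinter n).2) n.zero_le)

theorem summable_rpow_neg_sub_rpow_neg_of_interlaced {σ : ℝ} (hσ : 0 < σ) :
    Summable fun n => α n ^ (-σ) - β n ^ (-σ) := by
  have hpos n : 0 < α n := one_pos.trans_le (one_le_of_interlaced hinter hα n)
  refine summable_sub_of_interlaced (fun n => ?_) (fun n => ?_)
    fun n => Real.rpow_nonneg (hpos n).le _
  · exact Real.rpow_le_rpow_of_nonpos (hpos n) (hinter n).1 (by linarith)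
  · exact Real.rpow_le_rpow_of_nonpos ((hpos n).trans_le (hinter n).1) (hinter n).2 (by linarith)

theorem norm_cpow_neg_sub_cpow_neg_le_of_interlaced (n : ℕ) {s : ℂ} {σ : ℝ} (hσ : 0 < σ)
    (hσs : σ ≤ s.re) :
    ‖(α n : ℂ) ^ (-s) - (β n : ℂ) ^ (-s)‖ ≤ ‖s‖ / σ * (α n ^ (-σ) - β n ^ (-σ)) :=
  norm_cpow_neg_sub_cpow_neg_le (one_le_of_interlaced hinter hα n) (hinter n).1 hσ hσs

theorem summable_cpow_neg_sub_cpow_neg_of_interlaced {s : ℂ} (hs : 0 < s.re) :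
    Summable fun n => (α n : ℂ) ^ (-s) - (β n : ℂ) ^ (-s) :=
  .of_norm_bounded ((summable_rpow_neg_sub_rpow_neg_of_interlaced hinter hα hs).mul_left _)
    fun n => norm_cpow_neg_sub_cpow_neg_le_of_interlaced hinter hα n hs le_rfl

theorem differentiableOn_tsum_cpow_neg_sub_cpow_neg_of_interlaced :
    DifferentiableOn ℂ (fun s => ∑' n, ((α n : ℂ) ^ (-s) - (β n : ℂ) ^ (-s)))
      {s : ℂ | 0 < s.re} := by
  intro s₀ hs₀
  have hσ : 0 < s₀.re / 2 := half_pos hs₀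
  set U := {s : ℂ | s₀.re / 2 < s.re} ∩ Metric.ball 0 (‖s₀‖ + 1)
  have hU : IsOpen U := (isOpen_lt continuous_const continuous_re).inter Metric.isOpen_ball
  have hs₀U : s₀ ∈ U := ⟨show s₀.re / 2 < s₀.re from half_lt_self hs₀, by simp⟩
  refine (DifferentiableOn.differentiableAt ?_ (hU.mem_nhds hs₀U)).differentiableWithinAt
  refine differentiableOn_tsum_of_summable_norm
    ((summable_rpow_neg_sub_rpow_neg_of_interlaced hinter hα hσ).mul_left
      ((‖s₀‖ + 1) / (s₀.re / 2)))
    (fun n => ?_) hU fun n s hs => ?_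
  · have hpos : 0 < α n := one_pos.trans_le (one_le_of_interlaced hinter hα n)
    refine .sub (.const_cpow (by fun_prop) (.inl ?_)) (.const_cpow (by fun_prop) (.inl ?_))
    all_goals norm_cast; linarith [(hinter n).1]
  · refine (norm_cpow_neg_sub_cpow_neg_le_of_interlaced hinter hα n hσ hs.1.le).trans ?_
    have hnorm : ‖s‖ ≤ ‖s₀‖ + 1 := (mem_ball_zero_iff.1 hs.2).le
    have hβα : β n ^ (-(s₀.re / 2)) ≤ α n ^ (-(s₀.re / 2)) :=
      Real.rpow_le_rpow_of_nonpos (one_pos.trans_le (one_le_of_interlaced hinter hα n))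
        (hinter n).1 (by linarith)
    gcongr

end Interlaced

theorem stmt2_general (α β : ℕ → ℝ)
    (hinter : ∀ n, α n ≤ β n ∧ β n ≤ α (n + 1)) (hα1 : 1 < α 0) :
    ∃ g : ℂ → ℂ,
      AnalyticOn ℂ g {s : ℂ | 0 < s.re} ∧
      ∀ s ∈ {s : ℂ | 0 < s.re},
        HasSum (fun n => (α n : ℂ) ^ (-s) - (β n : ℂ) ^ (-s)) (g s) :=
  ⟨_, (differentiableOn_tsum_cpow_neg_sub_cpow_neg_of_interlaced hinter hα1.le).analyticOn
      (isOpen_lt continuous_const continuous_re),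
    fun _ hs => (summable_cpow_neg_sub_cpow_neg_of_interlaced hinter hα1.le hs).hasSum⟩

/-- The Dirichlet series `∑ (α n ^ (-s) - β n ^ (-s))`, for interlaced
increasing real sequences `α n ≤ β n ≤ α (n+1)` with `α 0 > 1` and `∑ (α n)^(-λ) < ∞`
for all `λ > 1`, converges to an analytic function on `Re s > 0`. -/
theorem stmt2 (α β : ℕ → ℝ)
    (hαmono : StrictMono α) (hβmono : StrictMono β)
    (hinter : ∀ n, α n ≤ β n ∧ β n ≤ α (n + 1)) (hα1 : 1 < α 0)
    (hsum : ∀ l : ℝ, 1 < l → Summable fun n => (α n) ^ (-l)) :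
    ∃ g : ℂ → ℂ,
      AnalyticOn ℂ g {s : ℂ | 0 < s.re} ∧
      ∀ s ∈ {s : ℂ | 0 < s.re},
        HasSum (fun n => (α n : ℂ) ^ (-s) - (β n : ℂ) ^ (-s)) (g s) :=
  stmt2_general α β hinter hα1
end

section
/- Let M = {p_{r₀}, p_{r₀+r}, p_{r₀+2r}, …} be an arithmetical list of primes of reason r > 1 (taking every r-th prime starting from the r₀-th). Then for Re(s) > 1 one has η₁(s) = r·η_M(s) + w(s), where η₁(s) = ∑_{p prime} p^{-s}, η_M(s) = ∑_{p ∈ M} p^{-s}, and w(s) is analytic on Re(s) > 0. -/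
/-!
Index the primes as `p_m = Nat.nth Nat.Prime m` and cut the indices into blocks
`k r ≤ m < (k + 1) r`, the `k`-th of which contains the index `r₀ - 1 + k r` of `M`. Replacing
every `p_m` by the element of `M` in its block turns `∑ p^{-s}` into `r · η_M(s)`, and the
error `w(s) = ∑_m (p_m^{-s} - p_{r₀ - 1 + ⌊m / r⌋ r}^{-s})` converges on `Re s > 0`: on
`ε ≤ Re s, ‖s‖ ≤ R` the `m`-th term is at most `(R / ε) (A_k^{-ε} - A_{k+1}^{-ε})` with
`A_k = p_{k r}` and `k = ⌊m / r⌋`, a telescoping majorant.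
-/

open Complex Set

theorem HasSum.comp_div_nat {M : Type*} [AddCommMonoid M] [TopologicalSpace M] [ContinuousAdd M]
    {f : ℕ → M} {a : M} (hf : HasSum f a) (r : ℕ) [NeZero r] :
    HasSum (fun m ↦ f (m / r)) (r • a) := by
  rw [← (Nat.divModEquiv r).symm.hasSum_iff]
  have hfiber (j : Fin r) : HasSum (fun p : ℕ × Fin r ↦ if p.2 = j then f p.1 else 0) a := by
    refine ((Prod.mk_left_injective j).hasSum_iff fun p hp ↦ ?_).1 (by simpa [Function.comp_def])
    rw [if_neg]
    rintro rfl
    exact hp ⟨p.1, rfl⟩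
  convert hasSum_sum (s := Finset.univ) fun j _ ↦ hfiber j using 1
  · ext p
    simpa using congrArg (f ∘ Prod.fst) ((Nat.divModEquiv r).apply_symm_apply p)
  · simp

theorem norm_cpow_neg_sub_cpow_neg_le_s10 {s : ℂ} {ε x y : ℝ} (hε : 0 < ε) (hεs : ε ≤ s.re)
    (hx : 1 ≤ x) (hxy : x ≤ y) :
    ‖(x : ℂ) ^ (-s) - (y : ℂ) ^ (-s)‖ ≤ ‖s‖ / ε * (x ^ (-ε) - y ^ (-ε)) := by
  have hpos {t : ℝ} (ht : t ∈ Icc x y) : 0 < t := by linarith [ht.1]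
  have hs : -s ≠ 0 := neg_ne_zero.2 fun h ↦ by simp [h] at hεs; linarith
  have hf {t : ℝ} (ht : t ∈ Icc x y) :
      HasDerivAt (fun t : ℝ ↦ (x : ℂ) ^ (-s) - (t : ℂ) ^ (-s)) (s * (t : ℂ) ^ (-s - 1)) t := by
    simpa using (hasDerivAt_ofReal_cpow_const (hpos ht).ne' hs).const_sub ((x : ℂ) ^ (-s))
  have hB {t : ℝ} (ht : t ∈ Icc x y) :
      HasDerivAt (fun t : ℝ ↦ ‖s‖ / ε * (x ^ (-ε) - t ^ (-ε))) (‖s‖ * t ^ (-ε - 1)) t := by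
    refine (((Real.hasDerivAt_rpow_const (Or.inl (hpos ht).ne')).const_sub
      (x ^ (-ε))).const_mul (‖s‖ / ε)).congr_deriv ?_
    field_simp
  -- the derivative `s t^{-s-1}` of the left side has norm at most `‖s‖ t^{-ε-1}`, the derivative
  -- of the right side, and both sides vanish at `t = x`
  refine image_norm_le_of_norm_deriv_right_le_deriv_boundary'
    (fun t ht ↦ (hf ht).continuousAt.continuousWithinAt)
    (fun t ht ↦ (hf (Ico_subset_Icc_self ht)).hasDerivWithinAt) (by simp)
    (fun t ht ↦ (hB ht).continuousAt.continuousWithinAt)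
    (fun t ht ↦ (hB (Ico_subset_Icc_self ht)).hasDerivWithinAt) (fun t ht ↦ ?_)
    (right_mem_Icc.2 hxy)
  have ht1 : 1 ≤ t := hx.trans ht.1
  rw [norm_mul, norm_cpow_eq_rpow_re_of_pos (hpos (Ico_subset_Icc_self ht))]
  gcongr
  simp only [sub_re, neg_re, one_re]
  linarith

theorem norm_cpow_neg_sub_cpow_neg_le_of_mem_Icc {s : ℂ} {ε a b x y : ℝ} (hε : 0 < ε)
    (hεs : ε ≤ s.re) (ha : 1 ≤ a) (hx : x ∈ Icc a b) (hy : y ∈ Icc a b) :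
    ‖(x : ℂ) ^ (-s) - (y : ℂ) ^ (-s)‖ ≤ ‖s‖ / ε * (a ^ (-ε) - b ^ (-ε)) := by
  wlog hxy : x ≤ y generalizing x y
  · rw [norm_sub_rev]
    exact this hy hx (le_of_not_ge hxy)
  refine (norm_cpow_neg_sub_cpow_neg_le_s10 hε hεs (ha.trans hx.1) hxy).trans ?_
  have hεneg : -ε ≤ 0 := by linarith
  gcongr ‖s‖ / ε * (?_ - ?_)
  · exact Real.rpow_le_rpow_of_nonpos (by linarith) hx.1 hεneg
  · exact Real.rpow_le_rpow_of_nonpos (by linarith [hy.1]) hy.2 hεneg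

theorem summable_sub_succ_of_antitone {g : ℕ → ℝ} (hg : Antitone g) (hg₀ : ∀ k, 0 ≤ g k) :
    Summable fun k ↦ g k - g (k + 1) := by
  refine summable_of_sum_range_le (c := g 0) (fun k ↦ sub_nonneg.2 (hg k.le_succ)) fun n ↦ ?_
  rw [Finset.sum_range_sub']
  linarith [hg₀ n]

theorem analyticOn_tsum_cpow_neg_sub_cpow_neg {A x y : ℕ → ℝ} {r : ℕ} [NeZero r]
    (hA : Monotone A) (hA₁ : 1 ≤ A 0)
    (hx : ∀ m, x m ∈ Icc (A (m / r)) (A (m / r + 1)))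
    (hy : ∀ m, y m ∈ Icc (A (m / r)) (A (m / r + 1))) :
    AnalyticOn ℂ (fun s : ℂ ↦ ∑' m, ((x m : ℂ) ^ (-s) - (y m : ℂ) ^ (-s))) {s | 0 < s.re} := by
  refine DifferentiableOn.analyticOn (fun s₀ hs₀ ↦ ?_) (isOpen_lt continuous_const continuous_re)
  set ε := s₀.re / 2
  set R := ‖s₀‖ + 1
  have hε : 0 < ε := half_pos hs₀
  have hV : IsOpen {s : ℂ | ε < s.re ∧ ‖s‖ < R} :=
    (isOpen_lt continuous_const continuous_re).inter (isOpen_lt continuous_norm continuous_const)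
  have hs₀V : s₀ ∈ {s : ℂ | ε < s.re ∧ ‖s‖ < R} := ⟨half_lt_self hs₀, lt_add_one _⟩
  have hA₁' (k : ℕ) : 1 ≤ A k := hA₁.trans (hA k.zero_le)
  have hAε : Antitone fun k ↦ A k ^ (-ε) := fun i j hij ↦
    Real.rpow_le_rpow_of_nonpos (by linarith [hA₁' i]) (hA hij) (by linarith)
  have hu : Summable fun m ↦ R / ε * (A (m / r) ^ (-ε) - A (m / r + 1) ^ (-ε)) :=
    ((summable_sub_succ_of_antitone hAε fun k ↦ Real.rpow_nonneg (by linarith [hA₁' k]) _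
      ).hasSum.comp_div_nat r).summable.mul_left (R / ε)
  refine (DifferentiableOn.differentiableAt ?_ (hV.mem_nhds hs₀V)).differentiableWithinAt
  refine differentiableOn_tsum_of_summable_norm hu (fun m ↦ ?_) hV fun m s hs ↦ ?_
  · have hpos (z : ℝ) (hz : z ∈ Icc (A (m / r)) (A (m / r + 1))) : (z : ℂ) ≠ 0 := by
      exact_mod_cast (zero_lt_one.trans_le ((hA₁' _).trans hz.1)).ne'
    exact ((differentiable_id.neg.const_cpow (.inl (hpos _ (hx m)))).sub
      (differentiable_id.neg.const_cpow (.inl (hpos _ (hy m))))).differentiableOn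
  · refine (norm_cpow_neg_sub_cpow_neg_le_of_mem_Icc hε hs.1.le (hA₁' _) (hx m) (hy m)).trans ?_
    gcongr
    · exact sub_nonneg.2 (hAε (m / r).le_succ)
    · exact hs.2.le

theorem Summable.tsum_eq_nsmul_tsum_add_tsum_sub {α : Type*} [AddCommGroup α] [TopologicalSpace α]
    [IsTopologicalAddGroup α] [T2Space α] {f g : ℕ → α} (hf : Summable f) (hg : Summable g)
    (r : ℕ) [NeZero r] :
    ∑' m, f m = r • ∑' n, g n + ∑' m, (f m - g (m / r)) := by
  have hgr := hg.hasSum.comp_div_nat r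
  rw [← hgr.tsum_eq, ← hgr.summable.tsum_add (hf.sub hgr.summable)]
  simp

theorem Complex.summable_cpow_neg_comp_injective {g : ℕ → ℕ} (hg : Function.Injective g) {s : ℂ}
    (hs : 1 < s.re) : Summable fun n ↦ (g n : ℂ) ^ (-s) := by
  have hζ : Summable fun n : ℕ ↦ (n : ℂ) ^ (-s) := by
    simpa [Complex.cpow_neg] using Complex.summable_one_div_nat_cpow.2 hs
  exact hζ.comp_injective hg

theorem stmt10_general (r r₀ : ℕ) (hr : 1 < r) (hr₀r : r₀ ≤ r)
    (M : Set ℕ) (hMdef : M = {p : ℕ | ∃ n : ℕ, p = Nat.nth Nat.Prime (r₀ - 1 + n * r)}) :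
    ∃ w : ℂ → ℂ,
      AnalyticOn ℂ w {s : ℂ | 0 < s.re} ∧
      ∀ s : ℂ, 1 < s.re →
        (∑' p : {p : ℕ | p.Prime}, ((p : ℕ) : ℂ) ^ (-s)) =
          (r : ℂ) * (∑' p : M, ((p : ℕ) : ℂ) ^ (-s)) + w s := by
  have : NeZero r := ⟨by omega⟩
  have hP : (Set.ofPred Nat.Prime).Infinite := Nat.infinite_setOfPred_prime
  set b : ℕ → ℕ := fun n ↦ r₀ - 1 + n * r
  have hb : Function.Injective (Nat.nth Nat.Prime ∘ b) :=
    (Nat.nth_injective hP).comp (StrictMono.injective fun i j hij ↦ by simp only [b]; gcongr)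
  have hblock {m i : ℕ} (h₁ : m / r * r ≤ i) (h₂ : i ≤ (m / r + 1) * r) :
      (Nat.nth Nat.Prime i : ℝ) ∈
        Icc (Nat.nth Nat.Prime (m / r * r) : ℝ) (Nat.nth Nat.Prime ((m / r + 1) * r)) :=
    ⟨mod_cast Nat.nth_monotone hP h₁, mod_cast Nat.nth_monotone hP h₂⟩
  refine ⟨fun s ↦ ∑' m, (((Nat.nth Nat.Prime m : ℝ) : ℂ) ^ (-s) -
    ((Nat.nth Nat.Prime (b (m / r)) : ℝ) : ℂ) ^ (-s)), ?_, fun s hs ↦ ?_⟩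
  · refine analyticOn_tsum_cpow_neg_sub_cpow_neg (A := fun k ↦ (Nat.nth Nat.Prime (k * r) : ℝ))
      (Nat.mono_cast.comp ((Nat.nth_monotone hP).comp fun _ _ h ↦ Nat.mul_le_mul_right r h))
      (mod_cast (Nat.prime_nth_prime _).one_le) (fun m ↦ hblock (Nat.div_mul_le_self m r) ?_)
      (fun m ↦ hblock (Nat.le_add_left _ _) ?_)
    · rw [Nat.succ_mul]
      exact (Nat.lt_div_mul_add (NeZero.pos r)).le
    · simp only [b, Nat.succ_mul]
      omega
  · have hM : M = Set.range (Nat.nth Nat.Prime ∘ b) :=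
      hMdef ▸ Set.ext fun p ↦ exists_congr fun n ↦ eq_comm
    rw [hM, tsum_range (fun p : ℕ ↦ (p : ℂ) ^ (-s)) hb, ← Nat.range_nth_of_infinite hP,
      tsum_range (fun p : ℕ ↦ (p : ℂ) ^ (-s)) (Nat.nth_injective hP), ← nsmul_eq_mul]
    push_cast
    exact (Complex.summable_cpow_neg_comp_injective (Nat.nth_injective hP) hs
      ).tsum_eq_nsmul_tsum_add_tsum_sub (Complex.summable_cpow_neg_comp_injective hb hs) r

/-- for the arithmetical list `M = {p_{r₀}, p_{r₀+r}, …}` of reason `r > 1`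
(every `r`-th prime starting from the `r₀`-th), one has, for `Re s > 1`,
`η₁(s) = r·η_M(s) + w(s)` with `w` analytic on `Re s > 0`. -/
theorem stmt10 (r r₀ : ℕ) (hr : 1 < r) (hr₀ : 1 ≤ r₀) (hr₀r : r₀ ≤ r)
    (M : Set ℕ) (hMdef : M = {p : ℕ | ∃ n : ℕ, p = Nat.nth Nat.Prime (r₀ - 1 + n * r)}) :
    ∃ w : ℂ → ℂ,
      AnalyticOn ℂ w {s : ℂ | 0 < s.re} ∧
      ∀ s : ℂ, 1 < s.re →
        (∑' p : {p : ℕ | p.Prime}, ((p : ℕ) : ℂ) ^ (-s)) =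
          (r : ℂ) * (∑' p : M, ((p : ℕ) : ℂ) ^ (-s)) + w s :=
  stmt10_general r r₀ hr hr₀r M hMdef
end

section
/- For M a subset of the primes, the function W_M(s) = ∏_{p ∈ M} [(1 - p^{-s}) e^{p^{-s}}]^{-1} is analytic and non-vanishing on Re(s) > 1/2, and satisfies Z_M(s) = W_M(s) · e^{η_M(s)} for Re(s) > 1, where η_M(s) = ∑_{p ∈ M} p^{-s}. -/
/-!
Writing `z = p⁻ˢ`, the factor `(1 - z) e^z` has the logarithm `log (1 - z) + z = O(|z|²)`.
For `Re s ≥ σ > 1/2` this is `O(p^{-2σ})`, so the series of these logarithms converges absolutely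
and uniformly on `Re s > σ`; its sum is holomorphic, and `W_M` is the exponential of minus
that sum, hence holomorphic and nonvanishing. For `Re s > 1` the series `η_M(s)` converges too,
and multiplying the product for `W_M(s)` termwise by that for `e^{η_M(s)}` gives the Euler
product `Z_M(s)`.
-/

open Complex

lemma norm_log_one_sub_add_self_le {z : ℂ} {r : ℝ} (hz : ‖z‖ ≤ r) (hr : r < 1) :
    ‖log (1 - z) + z‖ ≤ (1 - r)⁻¹ / 2 * ‖z‖ ^ 2 := by
  have h := norm_log_one_add_sub_self_le (z := -z) (by rw [norm_neg]; linarith)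
  rw [norm_neg, ← sub_eq_add_neg, sub_neg_eq_add] at h
  calc _ ≤ ‖z‖ ^ 2 * (1 - ‖z‖)⁻¹ / 2 := h
    _ ≤ ‖z‖ ^ 2 * (1 - r)⁻¹ / 2 := by gcongr
    _ = _ := by ring

lemma norm_natCast_cpow_neg_le {n : ℕ} (hn : 1 ≤ n) {σ : ℝ} {s : ℂ} (hs : σ ≤ s.re) :
    ‖(n : ℂ) ^ (-s)‖ ≤ (n : ℝ) ^ (-σ) := by
  rw [norm_natCast_cpow_of_pos hn, neg_re]
  exact Real.rpow_le_rpow_of_exponent_le (by exact_mod_cast hn) (by linarith)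

lemma norm_natCast_cpow_neg_lt_one {n : ℕ} (hn : 2 ≤ n) {s : ℂ} (hs : 0 < s.re) :
    ‖(n : ℂ) ^ (-s)‖ < 1 := by
  rw [norm_natCast_cpow_of_pos (by omega), neg_re]
  exact Real.rpow_lt_one_of_one_lt_of_neg (by exact_mod_cast hn) (by linarith)

lemma summable_sq_natCast_rpow_neg {σ : ℝ} (hσ : 1 / 2 < σ) :
    Summable fun n : ℕ => ((n : ℝ) ^ (-σ)) ^ 2 := by
  refine (Real.summable_nat_rpow.mpr (show -σ * 2 < -1 by linarith)).congr fun n => ?_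
  rw [Real.rpow_mul (Nat.cast_nonneg n), Real.rpow_two]

/-- A logarithm of the factor `(1 - n⁻ˢ) e^{n⁻ˢ}` of `W_M(s)⁻¹`. -/
noncomputable def logRegEulerFactor (n : ℕ) (s : ℂ) : ℂ :=
  log (1 - (n : ℂ) ^ (-s)) + (n : ℂ) ^ (-s)

lemma norm_logRegEulerFactor_le {n : ℕ} (hn : 2 ≤ n) {σ : ℝ} (hσ : 0 < σ) {s : ℂ}
    (hs : σ ≤ s.re) :
    ‖logRegEulerFactor n s‖ ≤ (1 - 2 ^ (-σ))⁻¹ / 2 * ((n : ℝ) ^ (-σ)) ^ 2 := by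
  have h2 : (2 : ℝ) ^ (-σ) < 1 := Real.rpow_lt_one_of_one_lt_of_neg one_lt_two (by linarith)
  have hn2 : (n : ℝ) ^ (-σ) ≤ 2 ^ (-σ) :=
    Real.rpow_le_rpow_of_nonpos two_pos (by exact_mod_cast hn) (by linarith)
  have hz := norm_natCast_cpow_neg_le (n := n) (by omega) hs
  refine (norm_log_one_sub_add_self_le (hz.trans hn2) h2).trans ?_
  have : 0 ≤ (1 - (2 : ℝ) ^ (-σ))⁻¹ := inv_nonneg.mpr (by linarith)
  gcongr

lemma differentiableAt_logRegEulerFactor {n : ℕ} (hn : 2 ≤ n) {s : ℂ} (hs : 0 < s.re) :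
    DifferentiableAt ℂ (logRegEulerFactor n) s := by
  have hz : DifferentiableAt ℂ (fun s : ℂ => (n : ℂ) ^ (-s)) s :=
    differentiableAt_id.neg.const_cpow (Or.inl (Nat.cast_ne_zero.mpr (by omega)))
  refine (((differentiableAt_const 1).sub hz).clog ?_).add hz
  simpa [sub_eq_add_neg] using mem_slitPlane_of_norm_lt_one (z := -(n : ℂ) ^ (-s))
    (by rw [norm_neg]; exact norm_natCast_cpow_neg_lt_one hn hs)

lemma exp_neg_logRegEulerFactor {n : ℕ} (hn : 2 ≤ n) {s : ℂ} (hs : 0 < s.re) :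
    exp (-logRegEulerFactor n s) = ((1 - (n : ℂ) ^ (-s)) * exp ((n : ℂ) ^ (-s)))⁻¹ := by
  have hne : 1 - (n : ℂ) ^ (-s) ≠ 0 :=
    sub_ne_zero.mpr fun h => by simpa [← h] using norm_natCast_cpow_neg_lt_one hn hs
  rw [logRegEulerFactor, neg_add, exp_add, exp_neg, exp_neg, exp_log hne, mul_inv]

section

variable {M : Set ℕ}

lemma summable_logRegEulerFactor (hM : ∀ n ∈ M, 2 ≤ n) {s : ℂ} (hs : 1 / 2 < s.re) :
    Summable fun n : M => logRegEulerFactor n s :=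
  (((summable_sq_natCast_rpow_neg hs).subtype M).mul_left _).of_norm_bounded fun n =>
    norm_logRegEulerFactor_le (hM _ n.2) (by linarith) le_rfl

lemma differentiableOn_tsum_logRegEulerFactor_of_lt (hM : ∀ n ∈ M, 2 ≤ n) {σ : ℝ}
    (hσ : 1 / 2 < σ) :
    DifferentiableOn ℂ (fun s => ∑' n : M, logRegEulerFactor n s) {s | σ < s.re} :=
  differentiableOn_tsum_of_summable_norm
    (((summable_sq_natCast_rpow_neg hσ).subtype M).mul_left _)
    (fun n s hs => (differentiableAt_logRegEulerFactor (hM _ n.2)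
      (by linarith [hs.out])).differentiableWithinAt)
    (isOpen_lt continuous_const continuous_re)
    (fun n s hs => norm_logRegEulerFactor_le (hM _ n.2) (by linarith) hs.out.le)

lemma differentiableOn_tsum_logRegEulerFactor (hM : ∀ n ∈ M, 2 ≤ n) :
    DifferentiableOn ℂ (fun s => ∑' n : M, logRegEulerFactor n s) {s | 1 / 2 < s.re} := by
  intro s (hs : 1 / 2 < s.re)
  have hσ : 1 / 2 < (1 / 2 + s.re) / 2 := by linarith
  refine ((differentiableOn_tsum_logRegEulerFactor_of_lt hM hσ).differentiableAt ?_)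
    |>.differentiableWithinAt
  exact (isOpen_lt continuous_const continuous_re).mem_nhds (show _ < s.re by linarith)

/-- The function `W_M`. -/
noncomputable def regEulerProduct (M : Set ℕ) (s : ℂ) : ℂ :=
  exp (-∑' n : M, logRegEulerFactor n s)

lemma analyticOn_regEulerProduct (hM : ∀ n ∈ M, 2 ≤ n) :
    AnalyticOn ℂ (regEulerProduct M) {s | 1 / 2 < s.re} :=
  (differentiableOn_tsum_logRegEulerFactor hM).neg.cexp.analyticOn
    (isOpen_lt continuous_const continuous_re)

lemma hasProd_regEulerProduct (hM : ∀ n ∈ M, 2 ≤ n) {s : ℂ} (hs : 1 / 2 < s.re) :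
    HasProd (fun n : M => ((1 - (n : ℂ) ^ (-s)) * exp ((n : ℂ) ^ (-s)))⁻¹)
      (regEulerProduct M s) := by
  rw [regEulerProduct]
  convert (summable_logRegEulerFactor hM hs).hasSum.neg.cexp using 1
  funext n
  exact (exp_neg_logRegEulerFactor (hM _ n.2) (by linarith)).symm

lemma tprod_inv_one_sub_natCast_cpow_neg (hM : ∀ n ∈ M, 2 ≤ n) {s : ℂ} (hs : 1 < s.re) :
    ∏' n : M, (1 - (n : ℂ) ^ (-s))⁻¹ =
      regEulerProduct M s * exp (∑' n : M, (n : ℂ) ^ (-s)) := by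
  have hη : Summable fun n : M => (n : ℂ) ^ (-s) :=
    ((Real.summable_nat_rpow.mpr (neg_lt_neg hs)).subtype M).of_norm_bounded fun n =>
      norm_natCast_cpow_neg_le (by linarith [hM _ n.2]) le_rfl
  have hW := hasProd_regEulerProduct hM (s := s) (by linarith)
  rw [← (hW.mul hη.hasSum.cexp).tprod_eq]
  congr 1 with n
  simp only [Function.comp_apply, mul_inv, mul_assoc, inv_mul_cancel₀ (exp_ne_zero _), mul_one]

end

/-- for `M` a set of primes, `W_M(s) = ∏_{p ∈ M} ((1 - p^{-s}) e^{p^{-s}})⁻¹`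
is analytic and nonvanishing on `Re s > 1/2`, and `Z_M(s) = W_M(s) e^{η_M(s)}` for
`Re s > 1`. -/
theorem stmt11 (M : Set ℕ) (hM : ∀ p ∈ M, Nat.Prime p) :
    ∃ W : ℂ → ℂ,
      AnalyticOn ℂ W {s : ℂ | 1 / 2 < s.re} ∧
      (∀ s ∈ {s : ℂ | 1 / 2 < s.re}, W s ≠ 0 ∧
        HasProd (fun p : M =>
          ((1 - ((p : ℕ) : ℂ) ^ (-s)) * Complex.exp (((p : ℕ) : ℂ) ^ (-s)))⁻¹) (W s)) ∧
      (∀ s : ℂ, 1 < s.re →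
        (∏' p : M, (1 - ((p : ℕ) : ℂ) ^ (-s))⁻¹) =
          W s * Complex.exp (∑' p : M, ((p : ℕ) : ℂ) ^ (-s))) := by
  have hM2 : ∀ p ∈ M, 2 ≤ p := fun p hp => (hM p hp).two_le
  exact ⟨regEulerProduct M, analyticOn_regEulerProduct hM2,
    fun s hs => ⟨exp_ne_zero _, hasProd_regEulerProduct hM2 hs⟩,
    fun s hs => tprod_inv_one_sub_natCast_cpow_neg hM2 hs⟩
end

section
/- For |x| < 1 and M a subset of the primes, let G_pop(x) = ∑_{k ∈ pop(M)} x^k. Then ∑_{n ∈ pop(M)} μ(n) G_pop(x^n) = x, and the identity Z_M(s)·∑_{n ∈ pop(M)} a_n/n^s = ∑_{n ∈ pop(M)} A_n/n^s (i.e., A_n = ∑_{d | n} a_d for n ∈ pop(M)) is equivalent to ∑_{n ∈ pop(M)} a_n G_pop(x^n) = ∑_{n ∈ pop(M)} A_n x^n for all |x| < 1. -/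
open Complex

/-- `popSet M` is the set of positive integers all of whose prime factors lie in `M`. -/
def popSet (M : Set ℕ) : Set ℕ := {n | 0 < n ∧ ∀ p : ℕ, p.Prime → p ∣ n → p ∈ M}

namespace Stmt14Aux

open scoped Classical NNReal

variable {M : Set ℕ}

lemma one_mem : 1 ∈ popSet M :=
  ⟨one_pos, fun p hp hdvd => absurd (Nat.dvd_one.mp hdvd) hp.ne_one⟩

lemma zero_not_mem : 0 ∉ popSet M := fun h => lt_irrefl 0 h.1

lemma mem_of_dvd {n d : ℕ} (hn : n ∈ popSet M) (hd : d ∣ n) : d ∈ popSet M :=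
  ⟨Nat.pos_of_dvd_of_pos hd hn.1, fun p hp hpd => hn.2 p hp (hpd.trans hd)⟩

lemma mul_mem {m n : ℕ} (hm : m ∈ popSet M) (hn : n ∈ popSet M) : m * n ∈ popSet M :=
  ⟨Nat.mul_pos hm.1 hn.1, fun p hp hpd => (hp.dvd_mul.mp hpd).elim (hm.2 p hp) (hn.2 p hp)⟩

lemma one_le_mem {n : ℕ} (hn : n ∈ popSet M) : 1 ≤ n := hn.1

/-- Normalize a polynomial-growth hypothesis. -/
lemma growth_norm {b : ℕ → ℂ} (h : ∃ C k : ℝ, ∀ n : ℕ, ‖b n‖ ≤ C * (n : ℝ) ^ k) :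
    ∃ (C : ℝ) (K : ℕ), 0 ≤ C ∧ ∀ n : ℕ, 1 ≤ n → ‖b n‖ ≤ C * (n : ℝ) ^ K := by
  obtain ⟨C, k, h⟩ := h
  have hC : 0 ≤ C := by
    have h1 := h 1
    simp only [Nat.cast_one, Real.one_rpow, mul_one] at h1
    exact (norm_nonneg _).trans h1
  refine ⟨C, ⌈max k 0⌉₊, hC, fun n hn => ?_⟩
  refine (h n).trans (mul_le_mul_of_nonneg_left ?_ hC)
  have h1 : (1 : ℝ) ≤ n := by exact_mod_cast hn
  calc (n : ℝ) ^ k ≤ (n : ℝ) ^ ((⌈max k 0⌉₊ : ℕ) : ℝ) := by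
        apply Real.rpow_le_rpow_of_exponent_le h1
        exact (le_max_left k 0).trans (Nat.le_ceil _)
    _ = (n : ℝ) ^ (⌈max k 0⌉₊ : ℕ) := Real.rpow_natCast _ _

lemma summable_polygeom (C : ℝ) (K : ℕ) {s : ℝ} (h0 : 0 ≤ s) (h1 : s < 1) :
    Summable (fun n : ℕ => C * (n : ℝ) ^ K * s ^ n) := by
  have h := summable_pow_mul_geometric_of_norm_lt_one (R := ℝ) K
    (r := s) (by rwa [Real.norm_eq_abs, _root_.abs_of_nonneg h0])
  simpa [mul_assoc] using h.mul_left C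

/-- Conversion between subtype tsum and indicator tsum. -/
lemma tsum_pop (g : ℕ → ℂ) :
    (∑' m : popSet M, g (m : ℕ)) = ∑' m : ℕ, (if m ∈ popSet M then g m else 0) := by
  rw [tsum_subtype]
  exact tsum_congr fun m => by by_cases h : m ∈ popSet M <;> simp [Set.indicator_apply, h]

/-- The key rearrangement lemma. -/
lemma key (M : Set ℕ) (b : ℕ → ℂ) {C : ℝ} {K : ℕ} (hC : 0 ≤ C)
    (hb : ∀ n : ℕ, 1 ≤ n → ‖b n‖ ≤ C * (n : ℝ) ^ K)
    {x : ℂ} (hx : ‖x‖ < 1) :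
    (∑' n : popSet M, b (n : ℕ) * ∑' k : popSet M, (x ^ (n : ℕ)) ^ (k : ℕ))
      = ∑' m : ℕ, (if m ∈ popSet M then ∑ d ∈ Nat.divisors m, b d else 0) * x ^ m := by
  set b' : ℕ → ℂ := fun n => if n ∈ popSet M then b n else 0 with hb'
  set i : ℕ → ℂ := fun k => if k ∈ popSet M then 1 else 0 with hi
  set F : ℕ × ℕ → ℂ := fun p => b' p.1 * i p.2 * x ^ (p.1 * p.2) with hF
  set s : ℝ := Real.sqrt ‖x‖ with hs
  have hs0 : 0 ≤ s := Real.sqrt_nonneg _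
  have hs1 : s < 1 := by
    rw [hs]
    rw [Real.sqrt_lt' one_pos]
    simpa using hx
  have hxs : ‖x‖ = s ^ 2 := (Real.sq_sqrt (norm_nonneg x)).symm
  -- summability of F
  have hFs : Summable F := by
    apply Summable.of_norm_bounded
      (g := fun p : ℕ × ℕ => (C * (p.1 : ℝ) ^ K * s ^ p.1) * s ^ p.2)
    · exact (summable_polygeom C K hs0 hs1).mul_of_nonneg
        (summable_geometric_of_lt_one hs0 hs1)
        (fun n => mul_nonneg (mul_nonneg hC (pow_nonneg (Nat.cast_nonneg n) K))
          (pow_nonneg hs0 n))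
        (fun k => pow_nonneg hs0 k)
    · rintro ⟨n, k⟩
      by_cases hn : n ∈ popSet M
      · by_cases hk : k ∈ popSet M
        · have h1n : 1 ≤ n := one_le_mem hn
          have h1k : 1 ≤ k := one_le_mem hk
          have hbF : ‖F (n, k)‖ = ‖b n‖ * ‖x‖ ^ (n * k) := by
            simp [hF, hb', hi, hn, hk, norm_mul, norm_pow]
          rw [hbF]
          have hpow : ‖x‖ ^ (n * k) ≤ s ^ n * s ^ k := by
            rw [hxs, ← pow_mul, ← pow_add]
            apply pow_le_pow_of_le_one hs0 hs1.le
            calc n + k ≤ n * k + n * k :=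
                  add_le_add (Nat.le_mul_of_pos_right n h1k) (Nat.le_mul_of_pos_left k h1n)
              _ = 2 * (n * k) := by ring
          calc ‖b n‖ * ‖x‖ ^ (n * k) ≤ (C * (n : ℝ) ^ K) * (s ^ n * s ^ k) :=
                mul_le_mul (hb n h1n) hpow (pow_nonneg (norm_nonneg x) _)
                  (mul_nonneg hC (pow_nonneg (Nat.cast_nonneg n) K))
            _ = (C * (n : ℝ) ^ K * s ^ n) * s ^ k := by ring
        · have : F (n, k) = 0 := by simp [hF, hi, hk]
          rw [this, norm_zero]
          exact mul_nonneg (mul_nonneg (mul_nonneg hC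
            (pow_nonneg (Nat.cast_nonneg n) K)) (pow_nonneg hs0 n)) (pow_nonneg hs0 k)
      · have : F (n, k) = 0 := by simp [hF, hb', hn]
        rw [this, norm_zero]
        exact mul_nonneg (mul_nonneg (mul_nonneg hC
          (pow_nonneg (Nat.cast_nonneg n) K)) (pow_nonneg hs0 n)) (pow_nonneg hs0 k)
  -- step 1 : rewrite LHS as iterated subtype sum of F
  have step1 : (∑' n : popSet M, b (n : ℕ) * ∑' k : popSet M, (x ^ (n : ℕ)) ^ (k : ℕ))
      = ∑' n : popSet M, ∑' k : popSet M, F ((n : ℕ), (k : ℕ)) := by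
    refine tsum_congr fun n => ?_
    rw [← tsum_mul_left]
    refine tsum_congr fun k => ?_
    simp [hF, hb', hi, n.2, k.2, ← pow_mul]
  -- step 2 : extend to ℕ sums
  have step2 : (∑' n : popSet M, ∑' k : popSet M, F ((n : ℕ), (k : ℕ)))
      = ∑' n : ℕ, ∑' k : ℕ, F (n, k) := by
    have inner : ∀ n : ℕ, (∑' k : popSet M, F (n, (k : ℕ))) = ∑' k : ℕ, F (n, k) := by
      intro n
      rw [tsum_pop (fun k => F (n, k))]
      refine tsum_congr fun k => ?_
      by_cases hk : k ∈ popSet M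
      · simp [hk]
      · simp [hk, hF, hi]
    calc (∑' n : popSet M, ∑' k : popSet M, F ((n : ℕ), (k : ℕ)))
        = ∑' n : popSet M, ∑' k : ℕ, F ((n : ℕ), k) := tsum_congr fun n => inner n
      _ = ∑' n : ℕ, ∑' k : ℕ, F (n, k) := by
          rw [tsum_pop (fun n => ∑' k : ℕ, F (n, k))]
          refine tsum_congr fun n => ?_
          by_cases hn : n ∈ popSet M
          · simp [hn]
          · simp only [hn, if_false]
            have : ∀ k : ℕ, F (n, k) = 0 := fun k => by simp [hF, hb', hn]
            simp [this]
  -- step 3 : product sum and fiberwise regrouping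
  have step3 : (∑' n : ℕ, ∑' k : ℕ, F (n, k)) = ∑' p : ℕ × ℕ, F p := (Summable.tsum_prod hFs).symm
  have step4 : (∑' p : ℕ × ℕ, F p)
      = ∑' m : ℕ, ∑' p : ((fun p : ℕ × ℕ => p.1 * p.2) ⁻¹' {m}), F (p : ℕ × ℕ) :=
    (hFs.hasSum.tsum_fiberwise (fun p => p.1 * p.2)).tsum_eq.symm
  -- step 5 : compute each fiber sum
  have step5 : ∀ m : ℕ,
      (∑' p : ((fun p : ℕ × ℕ => p.1 * p.2) ⁻¹' {m}), F (p : ℕ × ℕ))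
        = (if m ∈ popSet M then ∑ d ∈ Nat.divisors m, b d else 0) * x ^ m := by
    intro m
    rcases eq_or_ne m 0 with rfl | hm
    · have hz : ∀ p : ((fun p : ℕ × ℕ => p.1 * p.2) ⁻¹' {(0 : ℕ)}), F (p : ℕ × ℕ) = 0 := by
        rintro ⟨⟨n, k⟩, hp⟩
        simp only [Set.mem_preimage, Set.mem_singleton_iff] at hp
        rcases Nat.mul_eq_zero.mp hp with h | h
        · simp [hF, hb', h, zero_not_mem]
        · simp [hF, hi, h, zero_not_mem]
      rw [tsum_congr hz, tsum_zero]
      simp [zero_not_mem]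
    · have hfib : (fun p : ℕ × ℕ => p.1 * p.2) ⁻¹' {m} = ↑(Nat.divisorsAntidiagonal m) := by
        ext p
        simp [Nat.mem_divisorsAntidiagonal, hm]
      rw [hfib, Finset.tsum_subtype' (Nat.divisorsAntidiagonal m) F]
      have hxm : ∀ p ∈ Nat.divisorsAntidiagonal m, F p = b' p.1 * i p.2 * x ^ m := by
        intro p hp
        rw [hF]
        simp only
        rw [(Nat.mem_divisorsAntidiagonal.mp hp).1]
      rw [Finset.sum_congr rfl hxm, ← Finset.sum_mul]
      by_cases hmp : m ∈ popSet M
      · rw [if_pos hmp]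
        congr 1
        rw [Nat.sum_divisorsAntidiagonal (fun u v => b' u * i v)]
        refine Finset.sum_congr rfl fun d hd => ?_
        have hdvd : d ∣ m := (Nat.mem_divisors.mp hd).1
        have hd1 : d ∈ popSet M := mem_of_dvd hmp hdvd
        have hd2 : m / d ∈ popSet M := mem_of_dvd hmp (Nat.div_dvd_of_dvd hdvd)
        simp [hb', hi, hd1, hd2]
      · rw [if_neg hmp]
        have : ∀ p ∈ Nat.divisorsAntidiagonal m, b' p.1 * i p.2 = 0 := by
          rintro ⟨u, v⟩ hp
          have huv : u * v = m := (Nat.mem_divisorsAntidiagonal.mp hp).1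
          by_cases hu : u ∈ popSet M
          · by_cases hv : v ∈ popSet M
            · exact absurd (huv ▸ mul_mem hu hv) hmp
            · simp [hi, hv]
          · simp [hb', hu]
        rw [Finset.sum_congr rfl this]
        simp
  rw [step1, step2, step3, step4]
  exact tsum_congr step5

/-! ### Power-series coefficient uniqueness -/

noncomputable def fps (c : ℕ → ℂ) : FormalMultilinearSeries ℂ ℂ ℂ :=
  fun n => c n • ContinuousMultilinearMap.mkPiAlgebraFin ℂ n ℂ

lemma fps_norm (c : ℕ → ℂ) (n : ℕ) : ‖fps c n‖ = ‖c n‖ := by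
  have h := norm_smul (c n) (ContinuousMultilinearMap.mkPiAlgebraFin ℂ n ℂ)
  rw [fps, h, ContinuousMultilinearMap.norm_mkPiAlgebraFin, mul_one]

lemma fps_apply (c : ℕ → ℂ) (n : ℕ) (y : ℂ) : (fps c n) (fun _ => y) = c n * y ^ n := by
  simp [fps, ContinuousMultilinearMap.mkPiAlgebraFin_apply, List.ofFn_const,
    List.prod_replicate]

lemma fps_coeff (c : ℕ → ℂ) (n : ℕ) : (fps c).coeff n = c n := by
  simpa using fps_apply c n 1

lemma fps_radius {c : ℕ → ℂ} {C : ℝ} {K : ℕ} (hC : 0 ≤ C)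
    (h : ∀ n : ℕ, 1 ≤ n → ‖c n‖ ≤ C * (n : ℝ) ^ K) :
    ((2 : ℝ≥0)⁻¹ : ℝ≥0) ≤ (fps c).radius := by
  apply FormalMultilinearSeries.le_radius_of_summable_norm
  simp only [fps_norm, NNReal.coe_inv, NNReal.coe_ofNat]
  have hhalf0 : (0 : ℝ) ≤ (2 : ℝ)⁻¹ := by norm_num
  have hhalf1 : (2 : ℝ)⁻¹ < 1 := by norm_num
  have hb : Summable (fun n : ℕ =>
      ‖c 0‖ * (2 : ℝ)⁻¹ ^ n + C * (n : ℝ) ^ K * (2 : ℝ)⁻¹ ^ n) :=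
    ((summable_geometric_of_lt_one hhalf0 hhalf1).mul_left _).add
      (summable_polygeom C K hhalf0 hhalf1)
  refine hb.of_nonneg_of_le (fun n => mul_nonneg (norm_nonneg _)
    (pow_nonneg hhalf0 n)) (fun n => ?_)
  rcases Nat.eq_zero_or_pos n with rfl | hn
  · simp only [pow_zero, mul_one]
    nlinarith [mul_nonneg hC (pow_nonneg (Nat.cast_nonneg (0:ℕ) : (0:ℝ) ≤ ((0:ℕ):ℝ)) K)]
  · have hcn := h n hn
    have hp : (0:ℝ) ≤ (2 : ℝ)⁻¹ ^ n := pow_nonneg hhalf0 n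
    nlinarith [mul_nonneg (norm_nonneg (c 0)) hp, mul_nonneg (sub_nonneg.mpr hcn) hp]

lemma fps_hasAt {c : ℕ → ℂ} {C : ℝ} {K : ℕ} (hC : 0 ≤ C)
    (h : ∀ n : ℕ, 1 ≤ n → ‖c n‖ ≤ C * (n : ℝ) ^ K) :
    HasFPowerSeriesAt (fun y : ℂ => ∑' n : ℕ, c n * y ^ n) (fps c) 0 := by
  have hr : 0 < (fps c).radius :=
    lt_of_lt_of_le (by simp) (fps_radius hC h)
  have hball := (fps c).hasFPowerSeriesOnBall hr
  have hsum : (fps c).sum = fun y : ℂ => ∑' n : ℕ, c n * y ^ n := by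
    funext y
    exact tsum_congr fun n => fps_apply c n y
  rw [hsum] at hball
  exact hball.hasFPowerSeriesAt

lemma coeff_unique {c1 c2 : ℕ → ℂ} {C1 C2 : ℝ} {K1 K2 : ℕ}
    (hC1 : 0 ≤ C1) (hC2 : 0 ≤ C2)
    (h1 : ∀ n : ℕ, 1 ≤ n → ‖c1 n‖ ≤ C1 * (n : ℝ) ^ K1)
    (h2 : ∀ n : ℕ, 1 ≤ n → ‖c2 n‖ ≤ C2 * (n : ℝ) ^ K2)
    (h : ∀ x : ℂ, ‖x‖ < 1 → (∑' n : ℕ, c1 n * x ^ n) = ∑' n : ℕ, c2 n * x ^ n) :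
    ∀ n, c1 n = c2 n := by
  have hp := fps_hasAt hC1 h1
  have hq := fps_hasAt hC2 h2
  have heq : (fun y : ℂ => ∑' n : ℕ, c1 n * y ^ n)
      =ᶠ[nhds (0 : ℂ)] (fun y : ℂ => ∑' n : ℕ, c2 n * y ^ n) := by
    filter_upwards [Metric.ball_mem_nhds (0 : ℂ) one_pos] with z hz
    exact h z (by simpa [dist_zero_right] using hz)
  have hpq : fps c1 = fps c2 :=
    hp.eq_formalMultilinearSeries_of_eventually hq heq
  intro n
  have hn : (fps c1).coeff n = (fps c2).coeff n := by rw [hpq]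
  rwa [fps_coeff, fps_coeff] at hn

end Stmt14Aux

open Stmt14Aux in
theorem stmt14 (M : Set ℕ) (hM : ∀ p ∈ M, Nat.Prime p)
    (G : ℂ → ℂ)
    (hG : ∀ x : ℂ, ‖x‖ < 1 → G x = ∑' k : popSet M, x ^ (k : ℕ))
    (a A : ℕ → ℂ)
    (ha0 : ∀ n, n ∉ popSet M → a n = 0) (hA0 : ∀ n, n ∉ popSet M → A n = 0)
    (hagrow : ∃ C k : ℝ, ∀ n : ℕ, ‖a n‖ ≤ C * (n : ℝ) ^ k)
    (hAgrow : ∃ C k : ℝ, ∀ n : ℕ, ‖A n‖ ≤ C * (n : ℝ) ^ k) :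
    (∀ x : ℂ, ‖x‖ < 1 →
      (∑' n : popSet M, (ArithmeticFunction.moebius (n : ℕ) : ℂ) * G (x ^ (n : ℕ))) = x) ∧
    ((∀ n ∈ popSet M, A n = ∑ d ∈ Nat.divisors n, a d) ↔
      (∀ x : ℂ, ‖x‖ < 1 →
        (∑' n : popSet M, a n * G (x ^ (n : ℕ))) = ∑' n : popSet M, A n * x ^ (n : ℕ))) := by
  classical
  obtain ⟨Ca, Ka, hCa, hba⟩ := growth_norm hagrow
  obtain ⟨CA, KA, hCA, hbA⟩ := growth_norm hAgrow
  have hxpow : ∀ (x : ℂ), ‖x‖ < 1 → ∀ n : popSet M, ‖x ^ (n : ℕ)‖ < 1 := by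
    intro x hx n
    rw [norm_pow]
    exact pow_lt_one₀ (norm_nonneg x) hx n.2.1.ne'
  constructor
  · -- Möbius part
    intro x hx
    set b : ℕ → ℂ := fun n => ((ArithmeticFunction.moebius n : ℤ) : ℂ) with hbdef
    have hbbound : ∀ n : ℕ, 1 ≤ n → ‖b n‖ ≤ 1 * (n : ℝ) ^ (0 : ℕ) := by
      intro n _
      simp only [hbdef, pow_zero, mul_one]
      rw [Complex.norm_intCast]
      exact_mod_cast ArithmeticFunction.abs_moebius_le_one
    have hL : (∑' n : popSet M, (ArithmeticFunction.moebius (n : ℕ) : ℂ) * G (x ^ (n : ℕ)))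
        = ∑' n : popSet M, b (n : ℕ) * ∑' k : popSet M, (x ^ (n : ℕ)) ^ (k : ℕ) :=
      tsum_congr fun n => by rw [hG _ (hxpow x hx n)]
    rw [hL, key M b zero_le_one hbbound hx]
    have hcoeff : ∀ m : ℕ,
        (if m ∈ popSet M then ∑ d ∈ Nat.divisors m, b d else 0) * x ^ m
          = (if m = 1 then (1 : ℂ) else 0) * x ^ m := by
      intro m
      congr 1
      have hsum : (∑ d ∈ Nat.divisors m, b d) = (if m = 1 then (1 : ℂ) else 0) := by
        have hz : (∑ d ∈ Nat.divisors m, (ArithmeticFunction.moebius d : ℤ))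
            = (1 : ArithmeticFunction ℤ) m := by
          rw [← ArithmeticFunction.moebius_mul_coe_zeta]
          rw [ArithmeticFunction.coe_mul_zeta_apply]
        simp only [hbdef]
        have hcast : (∑ d ∈ Nat.divisors m, ((ArithmeticFunction.moebius d : ℤ) : ℂ))
            = (((1 : ArithmeticFunction ℤ) m : ℤ) : ℂ) := by
          rw [← hz]; push_cast; rfl
        rw [hcast, ArithmeticFunction.one_apply]
        split <;> simp
      by_cases hm : m ∈ popSet M
      · rw [if_pos hm, hsum]
      · rw [if_neg hm]
        have : m ≠ 1 := fun h => hm (h ▸ one_mem)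
        rw [if_neg this]
    rw [tsum_congr hcoeff]
    rw [tsum_eq_single 1 (fun m hm => by rw [if_neg hm, zero_mul])]
    simp
  · -- Dirichlet convolution part
    have keyA : ∀ x : ℂ, ‖x‖ < 1 →
        (∑' n : popSet M, a n * G (x ^ (n : ℕ)))
          = ∑' m : ℕ, (if m ∈ popSet M then ∑ d ∈ Nat.divisors m, a d else 0) * x ^ m := by
      intro x hx
      have hL : (∑' n : popSet M, a (n : ℕ) * G (x ^ (n : ℕ)))
          = ∑' n : popSet M, a (n : ℕ) * ∑' k : popSet M, (x ^ (n : ℕ)) ^ (k : ℕ) :=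
        tsum_congr fun n => by rw [hG _ (hxpow x hx n)]
      rw [hL, key M a hCa hba hx]
    have hRHS : ∀ x : ℂ,
        (∑' n : popSet M, A n * x ^ (n : ℕ))
          = ∑' m : ℕ, (if m ∈ popSet M then A m else 0) * x ^ m := by
      intro x
      rw [tsum_pop (fun m => A m * x ^ m)]
      exact tsum_congr fun m => by split <;> simp
    constructor
    · intro h x hx
      rw [keyA x hx, hRHS x]
      refine tsum_congr fun m => ?_
      congr 1
      by_cases hm : m ∈ popSet M
      · rw [if_pos hm, if_pos hm, h m hm]
      · rw [if_neg hm, if_neg hm]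
    · intro h
      set c1 : ℕ → ℂ := fun m => if m ∈ popSet M then ∑ d ∈ Nat.divisors m, a d else 0
        with hc1
      set c2 : ℕ → ℂ := fun m => if m ∈ popSet M then A m else 0 with hc2
      have hbc1 : ∀ m : ℕ, 1 ≤ m → ‖c1 m‖ ≤ Ca * (m : ℝ) ^ (Ka + 1) := by
        intro m hm
        have hnn : (0 : ℝ) ≤ Ca * (m : ℝ) ^ (Ka + 1) :=
          mul_nonneg hCa (pow_nonneg (Nat.cast_nonneg m) _)
        rw [hc1]
        by_cases hmp : m ∈ popSet M
        · simp only [hmp, if_true]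
          have hbound : ∀ d ∈ Nat.divisors m, ‖a d‖ ≤ Ca * (m : ℝ) ^ Ka := by
            intro d hd
            have hd1 : 1 ≤ d := Nat.pos_of_mem_divisors hd
            have hdm : d ≤ m := Nat.divisor_le hd
            refine (hba d hd1).trans (mul_le_mul_of_nonneg_left ?_ hCa)
            exact pow_le_pow_left₀ (Nat.cast_nonneg d) (by exact_mod_cast hdm) Ka
          calc ‖∑ d ∈ Nat.divisors m, a d‖ ≤ ∑ d ∈ Nat.divisors m, ‖a d‖ :=
                norm_sum_le _ _
            _ ≤ ∑ _d ∈ Nat.divisors m, Ca * (m : ℝ) ^ Ka :=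
                Finset.sum_le_sum hbound
            _ = (Nat.divisors m).card * (Ca * (m : ℝ) ^ Ka) := by
                rw [Finset.sum_const, nsmul_eq_mul]
            _ ≤ (m : ℝ) * (Ca * (m : ℝ) ^ Ka) := by
                refine mul_le_mul_of_nonneg_right ?_
                  (mul_nonneg hCa (pow_nonneg (Nat.cast_nonneg m) _))
                have hsub : Nat.divisors m ⊆ Finset.Icc 1 m := by
                  intro d hd
                  exact Finset.mem_Icc.mpr ⟨Nat.pos_of_mem_divisors hd, Nat.divisor_le hd⟩
                have := Finset.card_le_card hsub
                rw [Nat.card_Icc] at this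
                exact_mod_cast this.trans (by omega)
            _ = Ca * (m : ℝ) ^ (Ka + 1) := by ring
        · simp only [hmp, if_false, norm_zero]
          exact hnn
      have hbc2 : ∀ m : ℕ, 1 ≤ m → ‖c2 m‖ ≤ CA * (m : ℝ) ^ KA := by
        intro m hm
        rw [hc2]
        by_cases hmp : m ∈ popSet M
        · simpa [hmp] using hbA m hm
        · simp only [hmp, if_false, norm_zero]
          exact mul_nonneg hCA (pow_nonneg (Nat.cast_nonneg m) _)
      have heq : ∀ x : ℂ, ‖x‖ < 1 →
          (∑' m : ℕ, c1 m * x ^ m) = ∑' m : ℕ, c2 m * x ^ m := by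
        intro x hx
        rw [← keyA x hx, ← hRHS x]
        exact h x hx
      have := coeff_unique hCa hCA hbc1 hbc2 heq
      intro n hn
      have hcn := this n
      rw [hc1, hc2] at hcn
      simp only [hn, if_true] at hcn
      exact hcn.symm
end
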